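/- Equivalence of the divergence-regularized loss and the shifted approximation loss: for any continuously differentiable φ : ℝ^n → ℝ^n such that p_X(x)(A*Ax - φ(x)) → 0 suitably at infinity (so boundary terms in integration by parts vanish), one has ∫ p_X(x) [½‖φ(x) - (A*Ax - δ̂² ∇ log p_X(x))‖²] dx = ∫ p_X(x) [½‖φ(x) - A*Ax‖² - δ̂² ∇·φ(x)] dx + C, where C = δ̂² tr(A*A) + (δ̂⁴/2) ∫ p_X(x)‖∇ log p_X(x)‖² dx is independent of φ. -/

import Mathlib

open MeasureTheory
open scoped RealInnerProductSpace

private lemma stmt9_aux {n : ℕ} (δ : ℝ) (hδ : 0 < δ)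
    (p : EuclideanSpace ℝ (Fin n) → ℝ)
    (φ g s : EuclideanSpace ℝ (Fin n) → EuclideanSpace ℝ (Fin n))
    (dφ : EuclideanSpace ℝ (Fin n) → ℝ) (T : ℝ)
    (hpInt : Integrable p)
    (hp1 : ∫ x, p x = 1)
    (hF : Integrable (fun x => p x * ‖s x‖ ^ 2))
    (h1 : Integrable (fun x => p x * ‖φ x - (g x - δ ^ 2 • s x)‖ ^ 2))
    (h2 : Integrable (fun x => p x * ‖φ x - g x‖ ^ 2))
    (h3 : Integrable (fun x => p x * dφ x))
    (hps : ∀ x, p x • s x = gradient p x)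
    (hgd : ∫ x, ⟪g x - φ x, gradient p x⟫ = - ∫ x, p x * (T - dφ x)) :
    ∫ x, p x * ((1 / 2) * ‖φ x - (g x - δ ^ 2 • s x)‖ ^ 2) =
    (∫ x, p x * ((1 / 2) * ‖φ x - g x‖ ^ 2 - δ ^ 2 * dφ x)) +
      (δ ^ 2 * T + (δ ^ 4 / 2) * ∫ x, p x * ‖s x‖ ^ 2) := by
  -- pointwise expansion of the squared norm
  have hexp : ∀ x, ‖φ x - (g x - δ ^ 2 • s x)‖ ^ 2 =
      ‖φ x - g x‖ ^ 2 + 2 * δ ^ 2 * ⟪φ x - g x, s x⟫ + δ ^ 4 * ‖s x‖ ^ 2 := by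
    intro x
    have h0 : φ x - (g x - δ ^ 2 • s x) = (φ x - g x) + δ ^ 2 • s x := by abel
    rw [h0, norm_add_sq_real, real_inner_smul_right, norm_smul]
    have hn : ‖δ ^ 2‖ = δ ^ 2 := abs_of_pos (by positivity)
    rw [hn]; ring
  -- integrability of the pieces
  have hI1 : Integrable (fun x => p x * ((1 / 2) * ‖φ x - g x‖ ^ 2)) := by
    have := h2.const_mul (1 / 2)
    refine this.congr (Filter.Eventually.of_forall fun x => ?_); ring
  have hIF2 : Integrable (fun x => (δ ^ 4 / 2) * (p x * ‖s x‖ ^ 2)) :=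
    hF.const_mul _
  have hcross : Integrable (fun x => p x * ⟪φ x - g x, s x⟫) := by
    have ha := (h1.sub h2).sub (hF.const_mul (δ ^ 4))
    have hb := ha.const_mul (2 * δ ^ 2)⁻¹
    refine hb.congr (Filter.Eventually.of_forall fun x => ?_)
    simp only [Pi.sub_apply]
    rw [hexp x]
    have hne : (2 * δ ^ 2) ≠ 0 := by positivity
    field_simp; ring
  have hcross2 : Integrable (fun x => δ ^ 2 * (p x * ⟪φ x - g x, s x⟫)) :=
    hcross.const_mul _
  -- split the LHS integral
  have hLHS : ∫ x, p x * ((1 / 2) * ‖φ x - (g x - δ ^ 2 • s x)‖ ^ 2) =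
      (∫ x, p x * ((1 / 2) * ‖φ x - g x‖ ^ 2)) +
      (δ ^ 2 * ∫ x, p x * ⟪φ x - g x, s x⟫) +
      (δ ^ 4 / 2) * ∫ x, p x * ‖s x‖ ^ 2 := by
    have heq : (fun x => p x * ((1 / 2) * ‖φ x - (g x - δ ^ 2 • s x)‖ ^ 2)) =
        fun x => (p x * ((1 / 2) * ‖φ x - g x‖ ^ 2) +
          δ ^ 2 * (p x * ⟪φ x - g x, s x⟫)) +
          (δ ^ 4 / 2) * (p x * ‖s x‖ ^ 2) := by
      funext x; rw [hexp x]; ring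
    have hI12 : Integrable (fun x => p x * ((1 / 2) * ‖φ x - g x‖ ^ 2) +
        δ ^ 2 * (p x * ⟪φ x - g x, s x⟫)) := hI1.add hcross2
    rw [heq, integral_add hI12 hIF2, integral_add hI1 hcross2,
      integral_const_mul, integral_const_mul]
  -- cross term via integration by parts
  have hcrossval : ∫ x, p x * ⟪φ x - g x, s x⟫ = T - ∫ x, p x * dφ x := by
    have hpt : ∀ x, p x * ⟪φ x - g x, s x⟫ = -⟪g x - φ x, gradient p x⟫ := by
      intro x
      rw [← hps x, real_inner_smul_right]
      have hneg : g x - φ x = -(φ x - g x) := by abel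
      rw [hneg, inner_neg_left]; ring
    calc ∫ x, p x * ⟪φ x - g x, s x⟫
        = ∫ x, -⟪g x - φ x, gradient p x⟫ := congrArg _ (funext hpt)
      _ = -∫ x, ⟪g x - φ x, gradient p x⟫ := integral_neg _
      _ = ∫ x, p x * (T - dφ x) := by rw [hgd, neg_neg]
      _ = ∫ x, (T * p x - p x * dφ x) := by
          refine congrArg _ (funext fun x => ?_); ring
      _ = T * (∫ x, p x) - ∫ x, p x * dφ x := by
          rw [integral_sub (hpInt.const_mul T) h3, integral_const_mul]
      _ = T - ∫ x, p x * dφ x := by rw [hp1, mul_one]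
  -- split the RHS integral
  have hRHS : ∫ x, p x * ((1 / 2) * ‖φ x - g x‖ ^ 2 - δ ^ 2 * dφ x) =
      (∫ x, p x * ((1 / 2) * ‖φ x - g x‖ ^ 2)) -
      δ ^ 2 * ∫ x, p x * dφ x := by
    have heq : (fun x => p x * ((1 / 2) * ‖φ x - g x‖ ^ 2 - δ ^ 2 * dφ x)) =
        fun x => p x * ((1 / 2) * ‖φ x - g x‖ ^ 2) - δ ^ 2 * (p x * dφ x) := by
      funext x; ring
    rw [heq, integral_sub hI1 (h3.const_mul _), integral_const_mul]
  rw [hLHS, hRHS, hcrossval]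
  ring

/-- equivalence of the divergence-regularized loss and the
shifted approximation loss, up to a φ-independent constant
C = δ̂² tr(A*A) + (δ̂⁴/2) ∫ p_X ‖∇ log p_X‖². -/
theorem stmt9 {n : ℕ} (δhat : ℝ) (hδhat : 0 < δhat)
    (A : EuclideanSpace ℝ (Fin n) →L[ℝ] EuclideanSpace ℝ (Fin n))
    (pX : EuclideanSpace ℝ (Fin n) → ℝ)
    (hpX_pos : ∀ x, 0 < pX x) (hpX_diff : ContDiff ℝ 1 pX)
    (hpX_norm : ∫ x, pX x = 1)
    (hFisher : Integrable (fun x => pX x *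
      ‖gradient (fun x' => Real.log (pX x')) x‖ ^ 2))
    (φ : EuclideanSpace ℝ (Fin n) → EuclideanSpace ℝ (Fin n))
    (hφ_diff : ContDiff ℝ 1 φ)
    -- divergence of a vector field as the trace of its Jacobian
    (div : (EuclideanSpace ℝ (Fin n) → EuclideanSpace ℝ (Fin n)) →
      EuclideanSpace ℝ (Fin n) → ℝ)
    (hdiv : ∀ ψ x, div ψ x =
      LinearMap.trace ℝ (EuclideanSpace ℝ (Fin n))
        ((fderiv ℝ ψ x : EuclideanSpace ℝ (Fin n) →L[ℝ] EuclideanSpace ℝ (Fin n)) :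
          EuclideanSpace ℝ (Fin n) →ₗ[ℝ] EuclideanSpace ℝ (Fin n)))
    -- integrability assumptions
    (hint1 : Integrable (fun x => pX x *
      ‖φ x - ((ContinuousLinearMap.adjoint A) (A x) -
        δhat ^ 2 • gradient (fun x' => Real.log (pX x')) x)‖ ^ 2))
    (hint2 : Integrable (fun x => pX x * ‖φ x -
      (ContinuousLinearMap.adjoint A) (A x)‖ ^ 2))
    (hint3 : Integrable (fun x => pX x * div φ x))
    -- no boundary contribution in multidimensional integration by parts
    (hIBP : ∫ x, ⟪(ContinuousLinearMap.adjoint A) (A x) - φ x, gradient pX x⟫ =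
      - ∫ x, pX x * div (fun x' => (ContinuousLinearMap.adjoint A) (A x') - φ x') x) :
    ∫ x, pX x * ((1 / 2) * ‖φ x - ((ContinuousLinearMap.adjoint A) (A x) -
        δhat ^ 2 • gradient (fun x' => Real.log (pX x')) x)‖ ^ 2) =
    (∫ x, pX x * ((1 / 2) * ‖φ x - (ContinuousLinearMap.adjoint A) (A x)‖ ^ 2 -
        δhat ^ 2 * div φ x)) +
      (δhat ^ 2 * LinearMap.trace ℝ (EuclideanSpace ℝ (Fin n))
        (((ContinuousLinearMap.adjoint A).comp A :
          EuclideanSpace ℝ (Fin n) →L[ℝ] EuclideanSpace ℝ (Fin n)) :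
          EuclideanSpace ℝ (Fin n) →ₗ[ℝ] EuclideanSpace ℝ (Fin n)) +
       (δhat ^ 4 / 2) * ∫ x, pX x *
         ‖gradient (fun x' => Real.log (pX x')) x‖ ^ 2) := by
  set B : EuclideanSpace ℝ (Fin n) →L[ℝ] EuclideanSpace ℝ (Fin n) :=
    (ContinuousLinearMap.adjoint A).comp A with hB
  have hpInt : Integrable pX := by
    by_contra h
    rw [integral_undef h] at hpX_norm
    norm_num at hpX_norm
  have hps : ∀ x, pX x • gradient (fun x' => Real.log (pX x')) x = gradient pX x := by
    intro x
    have hd : HasFDerivAt pX (fderiv ℝ pX x) x :=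
      ((hpX_diff.differentiable one_ne_zero) x).hasFDerivAt
    have hlog := hd.log (hpX_pos x).ne'
    have h1 : gradient (fun x' => Real.log (pX x')) x = (pX x)⁻¹ • gradient pX x := by
      rw [hlog.hasGradientAt.gradient, _root_.map_smul]; rfl
    rw [h1, smul_smul, mul_inv_cancel₀ (hpX_pos x).ne', one_smul]
  -- divergence of g - φ
  have hdivgφ : ∀ x : EuclideanSpace ℝ (Fin n),
      div (fun x' => (ContinuousLinearMap.adjoint A) (A x') - φ x') x =
      LinearMap.trace ℝ (EuclideanSpace ℝ (Fin n))
        (B : EuclideanSpace ℝ (Fin n) →ₗ[ℝ] EuclideanSpace ℝ (Fin n)) - div φ x := by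
    intro x
    have hdφ : DifferentiableAt ℝ φ x := (hφ_diff.differentiable one_ne_zero) x
    have hdB : DifferentiableAt ℝ (fun x' : EuclideanSpace ℝ (Fin n) => B x') x :=
      B.differentiableAt
    have hfd : fderiv ℝ (fun x' => (ContinuousLinearMap.adjoint A) (A x') - φ x') x
        = B - fderiv ℝ φ x := by
      have heq : (fun x' => (ContinuousLinearMap.adjoint A) (A x') - φ x')
          = fun x' => (fun y : EuclideanSpace ℝ (Fin n) => B y) x' - φ x' := rfl
      rw [heq, fderiv_fun_sub hdB hdφ, B.fderiv]
    rw [hdiv, hfd, hdiv]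
    simp
  have hgd : ∫ x, ⟪(ContinuousLinearMap.adjoint A) (A x) - φ x, gradient pX x⟫ =
      - ∫ x, pX x * (LinearMap.trace ℝ (EuclideanSpace ℝ (Fin n))
        (B : EuclideanSpace ℝ (Fin n) →ₗ[ℝ] EuclideanSpace ℝ (Fin n)) - div φ x) := by
    rw [hIBP]
    congr 1
    exact congrArg _ (funext fun x => by rw [hdivgφ x])
  exact stmt9_aux δhat hδhat pX φ
    (fun x => (ContinuousLinearMap.adjoint A) (A x))
    (fun x => gradient (fun x' => Real.log (pX x')) x)
    (div φ) _ hpInt hpX_norm hFisher hint1 hint2 hint3 hps hgd
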